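/- Let Θ̂ = [Â B̂] and Θ* = [A* B*] be matrices in ℝ^{n×(n+m)}, K ∈ ℝ^{m×n} with ‖K‖_F ≤ K̄, and suppose there exist C ≥ 1 and ρ ∈ (0,1) with ‖(Â + B̂K)^k‖_F ≤ C ρ^k and ‖(A* + B*K)^k‖_F ≤ C ρ^k for all k ≥ 0. Let σ_w > 0, and for Θ ∈ {Θ̂, Θ*} define Σ_Θ := σ_w² ∑_{k=0}^∞ (A+BK)^k ((A+BK)ᵀ)^k and Σ̃_Θ := [I; K] Σ_Θ [I; K]ᵀ. Let Q and R be real symmetric matrices, V a real symmetric positive definite (n+m)×(n+m) matrix, λ > 0, D ≥ 0, β ≥ 0, and assume ‖(Θ̂ − Θ*) V^{1/2}‖_F ≤ β and ‖Θ̂‖_F ≤ D + 1/λ. Then | tr((Q + Kᵀ R K)(Σ_{Θ*} − Σ_{Θ̂})) | ≤ g · tr(V^{-1} Σ̃_{Θ*}), where g := (C²(‖Q‖_F + K̄² ‖R‖_F)/(1−ρ²)) · ( 2(D + 1/λ) β ‖V^{1/2}‖₂ + β² ). -/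

import Mathlib

open Matrix MeasureTheory ProbabilityTheory Filter

/-- Frobenius norm of a real matrix. -/
noncomputable def frob {α β : Type*} [Fintype α] [Fintype β] (A : Matrix α β ℝ) : ℝ :=
  Real.sqrt (∑ i, ∑ j, (A i j) ^ 2)

/-- Spectral norm (largest singular value) of a real matrix. -/
noncomputable def spec {α β : Type*} [Fintype α] [Fintype β] [DecidableEq β]
    (A : Matrix α β ℝ) : ℝ :=
  ‖LinearMap.toContinuousLinearMap (Matrix.toEuclideanLin A)‖

/-- The positive semidefinite square root of a positive semidefinite real matrix
(junk value `0` if the matrix is not positive semidefinite). -/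
noncomputable def msqrt {α : Type*} [Fintype α] [DecidableEq α]
    (M : Matrix α α ℝ) : Matrix α α ℝ :=
  open scoped Classical MatrixOrder in
  if h : M.PosSemidef then CFC.sqrt M else 0

/-- Euclidean norm of a real vector. -/
noncomputable def vnorm {α : Type*} [Fintype α] (v : α → ℝ) : ℝ :=
  Real.sqrt (∑ i, (v i) ^ 2)

/-- Closed-loop stationary state covariance
`Σ_Θ = σ_w² ∑_{k=0}^∞ (A+BK)^k ((A+BK)ᵀ)^k`. -/
noncomputable def clCov {n m : ℕ} (A : Matrix (Fin n) (Fin n) ℝ)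
    (B : Matrix (Fin n) (Fin m) ℝ) (K : Matrix (Fin m) (Fin n) ℝ) (σw : ℝ) :
    Matrix (Fin n) (Fin n) ℝ :=
  σw ^ 2 • ∑' k : ℕ, (A + B * K) ^ k * ((A + B * K)ᵀ) ^ k

/-- The lifted covariance `Σ̃_Θ = [I; K] Σ_Θ [I; K]ᵀ`. -/
noncomputable def clCovTilde {n m : ℕ} (A : Matrix (Fin n) (Fin n) ℝ)
    (B : Matrix (Fin n) (Fin m) ℝ) (K : Matrix (Fin m) (Fin n) ℝ) (σw : ℝ) :
    Matrix (Fin n ⊕ Fin m) (Fin n ⊕ Fin m) ℝ :=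
  fromRows (1 : Matrix (Fin n) (Fin n) ℝ) K * clCov A B K σw *
    (fromRows (1 : Matrix (Fin n) (Fin n) ℝ) K)ᵀ

/-! The covariance gap `X = Σ_{Θ*} - Σ_{Θ̂}` solves the Lyapunov equation `X = L̂ X L̂ᵀ + E` of the
estimated closed loop `L̂ = Â + B̂ K`, driven by `E = Θ* Σ̃ Θ*ᵀ - Θ̂ Σ̃ Θ̂ᵀ` with `Σ̃ = Σ̃_{Θ*}`;
exponential stability of `L̂` gives `‖X‖_F ≤ C² / (1 - ρ²) ‖E‖_F`. With `Δ = Θ̂ - Θ*` we have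
`E = Δ Σ̃ Δᵀ - Δ Σ̃ Θ̂ᵀ - Θ̂ Σ̃ Δᵀ`, and each term `X Σ̃ Yᵀ` factors as
`(X V^{1/2}) (V^{-1/2} Σ̃ V^{-1/2}) (Y V^{1/2})ᵀ`, whose positive semidefinite middle factor has
Frobenius norm at most its trace `tr (V⁻¹ Σ̃)`. -/

attribute [local instance] Matrix.frobeniusNormedAddCommGroup Matrix.frobeniusNormedSpace

variable {ι κ μ : Type*} [Fintype ι] [Fintype κ] [Fintype μ]

lemma frob_eq_norm (A : Matrix ι κ ℝ) : frob A = ‖A‖ := by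
  rw [frob, frobenius_norm_def, Real.sqrt_eq_rpow]
  simp only [Real.norm_eq_abs, Real.rpow_two, sq_abs]

lemma spec_nonneg [DecidableEq κ] (A : Matrix ι κ ℝ) : 0 ≤ spec A := norm_nonneg _

section msqrt

open scoped MatrixOrder

variable [DecidableEq ι] {V : Matrix ι ι ℝ}

lemma msqrt_of_posSemidef (hV : V.PosSemidef) : msqrt V = CFC.sqrt V := by
  rw [msqrt, dif_pos hV]

lemma Matrix.PosSemidef.msqrt_transpose (hV : V.PosSemidef) : (msqrt V)ᵀ = msqrt V := by
  rw [msqrt_of_posSemidef hV, ← conjTranspose_eq_transpose_of_trivial]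
  exact (CFC.sqrt_nonneg V).posSemidef.1

lemma Matrix.PosSemidef.msqrt_mul_transpose (hV : V.PosSemidef) : msqrt V * (msqrt V)ᵀ = V := by
  rw [hV.msqrt_transpose, msqrt_of_posSemidef hV, CFC.sqrt_mul_sqrt_self V hV.nonneg]

lemma Matrix.PosDef.isUnit_det_msqrt (hV : V.PosDef) : IsUnit (msqrt V).det := by
  have hdet : V.det = (msqrt V).det * (msqrt V).det := by
    conv_lhs => rw [← hV.posSemidef.msqrt_mul_transpose, det_mul, det_transpose]
  exact isUnit_iff_ne_zero.mpr fun h => hV.det_pos.ne' (by rw [hdet, h, mul_zero])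

end msqrt

section Ring
variable {R : Type*} [Ring R]

theorem eq_sum_range_pow_mul_mul_pow_add {X E a b : R} (h : X = a * X * b + E) (N : ℕ) :
    X = ∑ k ∈ Finset.range N, a ^ k * E * b ^ k + a ^ N * X * b ^ N := by
  induction N with
  | zero => simp
  | succ N ih =>
    have hstep : a ^ N * X * b ^ N = a ^ N * E * b ^ N + a ^ (N + 1) * X * b ^ (N + 1) := by
      conv_lhs => rw [h]
      rw [pow_succ, pow_succ']
      noncomm_ring
    rw [Finset.sum_range_succ, add_assoc, ← hstep]
    exact ih

theorem tsum_pow_mul_pow_eq_one_add [TopologicalSpace R] [IsTopologicalRing R] [T2Space R]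
    {a b : R} (h : Summable fun k : ℕ => a ^ k * b ^ k) :
    ∑' k : ℕ, a ^ k * b ^ k = 1 + a * (∑' k : ℕ, a ^ k * b ^ k) * b := by
  conv_lhs => rw [h.tsum_eq_zero_add]
  rw [pow_zero, pow_zero, one_mul, ← h.tsum_mul_left, ← (h.mul_left a).tsum_mul_right]
  congr 2 with k
  rw [pow_succ', pow_succ, mul_assoc, mul_assoc, mul_assoc]

end Ring

namespace Matrix

def toFrobeniusLp (A : Matrix ι κ ℝ) : PiLp 2 fun _ : ι => EuclideanSpace ℝ κ :=
  WithLp.toLp 2 fun i => WithLp.toLp 2 (A i)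

lemma norm_toFrobeniusLp (A : Matrix ι κ ℝ) : ‖A.toFrobeniusLp‖ = ‖A‖ := rfl

lemma inner_toFrobeniusLp (A B : Matrix ι κ ℝ) :
    inner ℝ A.toFrobeniusLp B.toFrobeniusLp = (A * Bᵀ).trace := by
  simp [toFrobeniusLp, PiLp.inner_apply, Matrix.trace, Matrix.mul_apply, mul_comm]

lemma abs_trace_mul_le (A : Matrix ι κ ℝ) (B : Matrix κ ι ℝ) : |(A * B).trace| ≤ ‖A‖ * ‖B‖ := by
  have h := abs_real_inner_le_norm A.toFrobeniusLp Bᵀ.toFrobeniusLp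
  rwa [inner_toFrobeniusLp, transpose_transpose, norm_toFrobeniusLp, norm_toFrobeniusLp,
    frobenius_norm_transpose] at h

lemma frobenius_norm_sq_eq_trace (A : Matrix ι κ ℝ) : ‖A‖ ^ 2 = (A * Aᵀ).trace := by
  rw [← norm_toFrobeniusLp, ← real_inner_self_eq_norm_sq, inner_toFrobeniusLp]

open scoped MatrixOrder in
lemma PosSemidef.frobenius_norm_le_trace {Z : Matrix ι ι ℝ} (hZ : Z.PosSemidef) :
    ‖Z‖ ≤ Z.trace := by
  classical
  obtain ⟨B, rfl⟩ := CStarAlgebra.nonneg_iff_eq_star_mul_self.mp hZ.nonneg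
  rw [star_eq_conjTranspose, conjTranspose_eq_transpose_of_trivial]
  calc ‖Bᵀ * B‖ ≤ ‖Bᵀ‖ * ‖B‖ := frobenius_norm_mul _ _
    _ = (Bᵀ * B).trace := by
      rw [frobenius_norm_transpose, ← sq, frobenius_norm_sq_eq_trace, trace_mul_comm]

lemma frobenius_norm_mul_le_mul_spec [DecidableEq κ] (B : Matrix ι κ ℝ) (A : Matrix κ μ ℝ) :
    ‖B * A‖ ≤ ‖B‖ * spec Aᵀ := by
  set T := LinearMap.toContinuousLinearMap (toEuclideanLin Aᵀ)
  change ‖B * A‖ ≤ ‖B‖ * ‖T‖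
  have hrow (i : ι) : ‖WithLp.toLp 2 ((B * A) i)‖ ^ 2 ≤ ‖WithLp.toLp 2 (B i)‖ ^ 2 * ‖T‖ ^ 2 := by
    have hT : T (WithLp.toLp 2 (B i)) = WithLp.toLp 2 ((B * A) i) := by
      ext j; simp [T, mul_apply, mulVec, dotProduct, mul_comm]
    rw [← hT, ← mul_pow, mul_comm]
    exact pow_le_pow_left₀ (norm_nonneg _) (T.le_opNorm _) 2
  rw [← pow_le_pow_iff_left₀ (norm_nonneg _) (by positivity) two_ne_zero, mul_pow,
    ← norm_toFrobeniusLp, ← norm_toFrobeniusLp, PiLp.norm_sq_eq_of_L2, PiLp.norm_sq_eq_of_L2,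
    Finset.sum_mul]
  exact Finset.sum_le_sum fun i _ => hrow i

lemma isClosed_setOf_posSemidef : IsClosed {M : Matrix ι ι ℝ | M.PosSemidef} := by
  simp only [posSemidef_iff_dotProduct_mulVec, Set.ofPred_and, Set.ofPred_forall]
  refine IsClosed.inter (isClosed_eq (by fun_prop) (by fun_prop)) (isClosed_iInter fun x => ?_)
  exact isClosed_le continuous_const (by fun_prop)

lemma posSemidef_tsum {β : Type*} {f : β → Matrix ι ι ℝ} (hf : ∀ k, (f k).PosSemidef) :
    (∑' k, f k).PosSemidef := by
  by_cases hs : Summable f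
  · exact isClosed_setOf_posSemidef.mem_of_tendsto hs.hasSum
      (Filter.Eventually.of_forall fun s => posSemidef_sum s fun k _ => hf k)
  · rw [tsum_eq_zero_of_not_summable hs]; exact PosSemidef.zero

lemma frobenius_norm_mul_mul_transpose_le (A : Matrix ι κ ℝ) (E : Matrix κ κ ℝ) :
    ‖A * E * Aᵀ‖ ≤ ‖A‖ ^ 2 * ‖E‖ := by
  calc ‖A * E * Aᵀ‖ ≤ ‖A‖ * ‖E‖ * ‖Aᵀ‖ :=
        (frobenius_norm_mul _ _).trans (by gcongr; exact frobenius_norm_mul _ _)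
    _ = ‖A‖ ^ 2 * ‖E‖ := by rw [frobenius_norm_transpose]; ring

section Stable

variable [DecidableEq ι] {L : Matrix ι ι ℝ} {C ρ : ℝ}

lemma sq_frobenius_norm_pow_le (hL : ∀ k : ℕ, ‖L ^ k‖ ≤ C * ρ ^ k) (k : ℕ) :
    ‖L ^ k‖ ^ 2 ≤ C ^ 2 * (ρ ^ 2) ^ k := by
  rw [← pow_mul, mul_comm 2 k, pow_mul, ← mul_pow]
  exact pow_le_pow_left₀ (norm_nonneg _) (hL k) 2

lemma summable_pow_mul_transpose_pow (hρ : ρ ^ 2 < 1) (hL : ∀ k : ℕ, ‖L ^ k‖ ≤ C * ρ ^ k) :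
    Summable fun k : ℕ => L ^ k * Lᵀ ^ k := by
  refine Summable.of_norm_bounded
    ((summable_geometric_of_lt_one (sq_nonneg ρ) hρ).mul_left (C ^ 2)) fun k => ?_
  calc ‖L ^ k * Lᵀ ^ k‖ ≤ ‖L ^ k‖ * ‖(L ^ k)ᵀ‖ := by
        rw [transpose_pow]; exact frobenius_norm_mul _ _
    _ ≤ C ^ 2 * (ρ ^ 2) ^ k := by
      rw [frobenius_norm_transpose, ← sq]; exact sq_frobenius_norm_pow_le hL k

theorem frobenius_norm_le_of_eq_mul_mul_transpose_add (hρ : ρ ^ 2 < 1)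
    (hL : ∀ k : ℕ, ‖L ^ k‖ ≤ C * ρ ^ k) {X E : Matrix ι ι ℝ} (hX : X = L * X * Lᵀ + E) :
    ‖X‖ ≤ C ^ 2 / (1 - ρ ^ 2) * ‖E‖ := by
  have hterm (Y : Matrix ι ι ℝ) (k : ℕ) : ‖L ^ k * Y * Lᵀ ^ k‖ ≤ C ^ 2 * (ρ ^ 2) ^ k * ‖Y‖ := by
    rw [← transpose_pow]
    exact (frobenius_norm_mul_mul_transpose_le _ _).trans
      (by gcongr; exact sq_frobenius_norm_pow_le hL k)
  have hgeom (N : ℕ) : ∑ k ∈ Finset.range N, (ρ ^ 2) ^ k ≤ 1 / (1 - ρ ^ 2) := by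
    have h := geom_sum_Ico_le_of_lt_one (m := 0) (n := N) (sq_nonneg ρ) hρ
    rwa [← Finset.range_eq_Ico, pow_zero] at h
  have hbound (N : ℕ) : ‖X‖ ≤ C ^ 2 / (1 - ρ ^ 2) * ‖E‖ + C ^ 2 * (ρ ^ 2) ^ N * ‖X‖ := by
    calc ‖X‖ ≤ ∑ k ∈ Finset.range N, ‖L ^ k * E * Lᵀ ^ k‖ + ‖L ^ N * X * Lᵀ ^ N‖ := by
          conv_lhs => rw [eq_sum_range_pow_mul_mul_pow_add hX N]
          exact (norm_add_le _ _).trans (add_le_add (norm_sum_le _ _) le_rfl)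
      _ ≤ ∑ k ∈ Finset.range N, C ^ 2 * (ρ ^ 2) ^ k * ‖E‖ + C ^ 2 * (ρ ^ 2) ^ N * ‖X‖ := by
          gcongr with k <;> apply hterm
      _ ≤ C ^ 2 / (1 - ρ ^ 2) * ‖E‖ + C ^ 2 * (ρ ^ 2) ^ N * ‖X‖ := by
          rw [← Finset.sum_mul, ← Finset.mul_sum, div_eq_mul_one_div]
          gcongr
          exact hgeom N
  refine ge_of_tendsto' (x := Filter.atTop) ?_ hbound
  simpa using tendsto_const_nhds.add
    (((tendsto_pow_atTop_nhds_zero_of_lt_one (sq_nonneg ρ) hρ).const_mul (C ^ 2)).mul_const ‖X‖)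

end Stable

section Weighted

variable [DecidableEq κ]

lemma trace_inv_mul_transpose_mul (S P : Matrix κ κ ℝ) :
    ((S * Sᵀ)⁻¹ * P).trace = (S⁻¹ * P * S⁻¹ᵀ).trace := by
  rw [mul_inv_rev, ← transpose_nonsing_inv, mul_assoc, trace_mul_comm]

lemma PosSemidef.inv_mul_mul_inv_transpose {P : Matrix κ κ ℝ} (hP : P.PosSemidef)
    (S : Matrix κ κ ℝ) : (S⁻¹ * P * S⁻¹ᵀ).PosSemidef := by
  simpa using hP.mul_mul_conjTranspose_same S⁻¹

lemma PosSemidef.trace_inv_mul_transpose_mul_nonneg {P : Matrix κ κ ℝ} (hP : P.PosSemidef)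
    (S : Matrix κ κ ℝ) : 0 ≤ ((S * Sᵀ)⁻¹ * P).trace := by
  rw [trace_inv_mul_transpose_mul]
  exact (hP.inv_mul_mul_inv_transpose S).trace_nonneg

theorem frobenius_norm_mul_mul_transpose_le_trace {S P : Matrix κ κ ℝ} (hS : IsUnit S.det)
    (hP : P.PosSemidef) (X : Matrix ι κ ℝ) (Y : Matrix μ κ ℝ) :
    ‖X * P * Yᵀ‖ ≤ ‖X * S‖ * ‖Y * S‖ * ((S * Sᵀ)⁻¹ * P).trace := by
  set Z := S⁻¹ * P * S⁻¹ᵀ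
  have hfactor : X * P * Yᵀ = X * S * Z * (Y * S)ᵀ := by
    have hSS : S * S⁻¹ = 1 := mul_nonsing_inv S hS
    have hSS' : S⁻¹ᵀ * Sᵀ = 1 := by rw [← transpose_mul, hSS, transpose_one]
    simp only [Z, transpose_mul, Matrix.mul_assoc]
    rw [← Matrix.mul_assoc S⁻¹ᵀ, hSS', Matrix.one_mul, ← Matrix.mul_assoc S, hSS, Matrix.one_mul]
  calc ‖X * P * Yᵀ‖ ≤ ‖X * S‖ * ‖Z‖ * ‖(Y * S)ᵀ‖ := by
        rw [hfactor]
        exact (frobenius_norm_mul _ _).trans (by gcongr; exact frobenius_norm_mul _ _)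
    _ ≤ ‖X * S‖ * Z.trace * ‖Y * S‖ := by
        rw [frobenius_norm_transpose]
        gcongr
        exact (hP.inv_mul_mul_inv_transpose S).frobenius_norm_le_trace
    _ = ‖X * S‖ * ‖Y * S‖ * ((S * Sᵀ)⁻¹ * P).trace := by
        rw [trace_inv_mul_transpose_mul]; ring

end Weighted

theorem frobenius_norm_conj_sub_conj_le [DecidableEq κ] {V P : Matrix κ κ ℝ}
    {Θ Θ' : Matrix ι κ ℝ} {d β : ℝ} (hV : V.PosDef) (hP : P.PosSemidef) (hΘ : ‖Θ‖ ≤ d)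
    (hβ : ‖(Θ - Θ') * msqrt V‖ ≤ β) :
    ‖Θ' * P * Θ'ᵀ - Θ * P * Θᵀ‖ ≤ (2 * d * β * spec (msqrt V) + β ^ 2) * (V⁻¹ * P).trace := by
  set S := msqrt V
  set Δ := Θ - Θ'
  have hSV : S * Sᵀ = V := hV.posSemidef.msqrt_mul_transpose
  have hcs (X Y : Matrix ι κ ℝ) : ‖X * P * Yᵀ‖ ≤ ‖X * S‖ * ‖Y * S‖ * (V⁻¹ * P).trace :=
    hSV ▸ frobenius_norm_mul_mul_transpose_le_trace hV.isUnit_det_msqrt hP X Y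
  have hT : 0 ≤ (V⁻¹ * P).trace := hSV ▸ hP.trace_inv_mul_transpose_mul_nonneg S
  have hβ0 : 0 ≤ β := (norm_nonneg _).trans hβ
  have hdS : 0 ≤ d * spec S := mul_nonneg ((norm_nonneg _).trans hΘ) (spec_nonneg S)
  have hΘS : ‖Θ * S‖ ≤ d * spec S := by
    refine (frobenius_norm_mul_le_mul_spec Θ S).trans ?_
    rw [hV.posSemidef.msqrt_transpose]
    exact mul_le_mul_of_nonneg_right hΘ (spec_nonneg S)
  have hdecomp : Θ' * P * Θ'ᵀ - Θ * P * Θᵀ = Δ * P * Δᵀ - Δ * P * Θᵀ - Θ * P * Δᵀ := by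
    simp only [Δ, transpose_sub, Matrix.mul_sub, Matrix.sub_mul]
    abel
  calc ‖Θ' * P * Θ'ᵀ - Θ * P * Θᵀ‖
      ≤ ‖Δ * P * Δᵀ‖ + ‖Δ * P * Θᵀ‖ + ‖Θ * P * Δᵀ‖ := by
        rw [hdecomp]
        exact (norm_sub_le _ _).trans (add_le_add (norm_sub_le _ _) le_rfl)
    _ ≤ ‖Δ * S‖ * ‖Δ * S‖ * (V⁻¹ * P).trace + ‖Δ * S‖ * ‖Θ * S‖ * (V⁻¹ * P).trace
          + ‖Θ * S‖ * ‖Δ * S‖ * (V⁻¹ * P).trace := by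
        gcongr <;> apply hcs
    _ ≤ β * β * (V⁻¹ * P).trace + β * (d * spec S) * (V⁻¹ * P).trace
          + d * spec S * β * (V⁻¹ * P).trace := by
        gcongr
    _ = (2 * d * β * spec S + β ^ 2) * (V⁻¹ * P).trace := by ring

end Matrix

section ClosedLoop

variable {n m : ℕ} (A : Matrix (Fin n) (Fin n) ℝ) (B : Matrix (Fin n) (Fin m) ℝ)
  (K : Matrix (Fin m) (Fin n) ℝ) (σw : ℝ)

lemma closedLoop_mul_mul_transpose (P : Matrix (Fin n) (Fin n) ℝ) :
    (A + B * K) * P * (A + B * K)ᵀ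
      = fromCols A B * (fromRows (1 : Matrix (Fin n) (Fin n) ℝ) K * P *
          (fromRows (1 : Matrix (Fin n) (Fin n) ℝ) K)ᵀ) * (fromCols A B)ᵀ := by
  have hL : A + B * K = fromCols A B * fromRows (1 : Matrix (Fin n) (Fin n) ℝ) K := by
    rw [fromCols_mul_fromRows, Matrix.mul_one]
  rw [hL, transpose_mul]
  simp only [Matrix.mul_assoc]

lemma clCov_posSemidef : (clCov A B K σw).PosSemidef :=
  (Matrix.posSemidef_tsum fun k => by
    simpa [transpose_pow] using posSemidef_self_mul_conjTranspose ((A + B * K) ^ k)).smul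
    (sq_nonneg σw)

lemma clCovTilde_posSemidef : (clCovTilde A B K σw).PosSemidef := by
  simpa only [clCovTilde, conjTranspose_eq_transpose_of_trivial] using
    (clCov_posSemidef A B K σw).mul_mul_conjTranspose_same
      (fromRows (1 : Matrix (Fin n) (Fin n) ℝ) K)

variable {A B K σw}

lemma clCov_eq_smul_one_add (h : Summable fun k : ℕ => (A + B * K) ^ k * (A + B * K)ᵀ ^ k) :
    clCov A B K σw = σw ^ 2 • 1 + (A + B * K) * clCov A B K σw * (A + B * K)ᵀ := by
  conv_lhs => rw [clCov, tsum_pow_mul_pow_eq_one_add h]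
  rw [clCov, smul_add, mul_smul_comm, smul_mul_assoc]

theorem clCov_sub_clCov_eq {Ah As : Matrix (Fin n) (Fin n) ℝ} {Bh Bs : Matrix (Fin n) (Fin m) ℝ}
    (hh : Summable fun k : ℕ => (Ah + Bh * K) ^ k * (Ah + Bh * K)ᵀ ^ k)
    (hs : Summable fun k : ℕ => (As + Bs * K) ^ k * (As + Bs * K)ᵀ ^ k) :
    clCov As Bs K σw - clCov Ah Bh K σw
      = (Ah + Bh * K) * (clCov As Bs K σw - clCov Ah Bh K σw) * (Ah + Bh * K)ᵀ
        + (fromCols As Bs * clCovTilde As Bs K σw * (fromCols As Bs)ᵀ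
          - fromCols Ah Bh * clCovTilde As Bs K σw * (fromCols Ah Bh)ᵀ) := by
  rw [clCovTilde, ← closedLoop_mul_mul_transpose, ← closedLoop_mul_mul_transpose]
  conv_lhs => rw [clCov_eq_smul_one_add hs, clCov_eq_smul_one_add hh]
  simp only [Matrix.mul_sub, Matrix.sub_mul]
  abel

end ClosedLoop

theorem cost_difference_bound_weighted_star_general {n m : ℕ}
    (Ahat Astar : Matrix (Fin n) (Fin n) ℝ) (Bhat Bstar : Matrix (Fin n) (Fin m) ℝ)
    (K : Matrix (Fin m) (Fin n) ℝ) (Kbar C ρ σw lam D β : ℝ)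
    (Q : Matrix (Fin n) (Fin n) ℝ) (R : Matrix (Fin m) (Fin m) ℝ)
    (V : Matrix (Fin n ⊕ Fin m) (Fin n ⊕ Fin m) ℝ)
    (hK : frob K ≤ Kbar) (hρ : ρ ∈ Set.Ioo (0 : ℝ) 1)
    (hhat : ∀ k : ℕ, frob ((Ahat + Bhat * K) ^ k) ≤ C * ρ ^ k)
    (hstar : ∀ k : ℕ, frob ((Astar + Bstar * K) ^ k) ≤ C * ρ ^ k)
    (hV : V.PosDef)
    (hdiff : frob ((fromCols Ahat Bhat - fromCols Astar Bstar) * msqrt V) ≤ β)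
    (hhatnorm : frob (fromCols Ahat Bhat) ≤ D + 1 / lam) :
    |((Q + Kᵀ * R * K) * (clCov Astar Bstar K σw - clCov Ahat Bhat K σw)).trace|
      ≤ (C ^ 2 * (frob Q + Kbar ^ 2 * frob R) / (1 - ρ ^ 2)) *
          (2 * (D + 1 / lam) * β * spec (msqrt V) + β ^ 2) *
          (V⁻¹ * clCovTilde Astar Bstar K σw).trace := by
  simp only [frob_eq_norm] at *
  have hρ2 : ρ ^ 2 < 1 := pow_lt_one₀ hρ.1.le hρ.2 two_ne_zero
  have hgap := frobenius_norm_le_of_eq_mul_mul_transpose_add hρ2 hhat <|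
    clCov_sub_clCov_eq (σw := σw)
      (summable_pow_mul_transpose_pow hρ2 hhat) (summable_pow_mul_transpose_pow hρ2 hstar)
  have hdrive := frobenius_norm_conj_sub_conj_le hV (clCovTilde_posSemidef Astar Bstar K σw)
    hhatnorm hdiff
  have hcost : ‖Q + Kᵀ * R * K‖ ≤ ‖Q‖ + Kbar ^ 2 * ‖R‖ := by
    have hKt : ‖Kᵀ‖ ^ 2 ≤ Kbar ^ 2 := by
      rw [frobenius_norm_transpose]; exact pow_le_pow_left₀ (norm_nonneg _) hK 2
    have h := frobenius_norm_mul_mul_transpose_le Kᵀ R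
    rw [transpose_transpose] at h
    exact (norm_add_le _ _).trans (add_le_add le_rfl (h.trans (by gcongr)))
  have hgain : 0 ≤ C ^ 2 / (1 - ρ ^ 2) := div_nonneg (sq_nonneg C) (sub_pos.mpr hρ2).le
  calc _ ≤ ‖Q + Kᵀ * R * K‖ * ‖clCov Astar Bstar K σw - clCov Ahat Bhat K σw‖ :=
        abs_trace_mul_le _ _
    _ ≤ (‖Q‖ + Kbar ^ 2 * ‖R‖) * (C ^ 2 / (1 - ρ ^ 2) *
          ((2 * (D + 1 / lam) * β * spec (msqrt V) + β ^ 2) *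
            (V⁻¹ * clCovTilde Astar Bstar K σw).trace)) :=
        mul_le_mul hcost (hgap.trans (mul_le_mul_of_nonneg_left hdrive hgain)) (norm_nonneg _)
          ((norm_nonneg _).trans hcost)
    _ = _ := by ring

theorem cost_difference_bound_weighted_star {n m : ℕ}
    (Ahat Astar : Matrix (Fin n) (Fin n) ℝ) (Bhat Bstar : Matrix (Fin n) (Fin m) ℝ)
    (K : Matrix (Fin m) (Fin n) ℝ) (Kbar C ρ σw lam D β : ℝ)
    (Q : Matrix (Fin n) (Fin n) ℝ) (R : Matrix (Fin m) (Fin m) ℝ)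
    (V : Matrix (Fin n ⊕ Fin m) (Fin n ⊕ Fin m) ℝ)
    (hK : frob K ≤ Kbar) (hC : 1 ≤ C) (hρ : ρ ∈ Set.Ioo (0 : ℝ) 1)
    (hhat : ∀ k : ℕ, frob ((Ahat + Bhat * K) ^ k) ≤ C * ρ ^ k)
    (hstar : ∀ k : ℕ, frob ((Astar + Bstar * K) ^ k) ≤ C * ρ ^ k)
    (hσ : 0 < σw) (hQ : Q.IsSymm) (hR : R.IsSymm) (hV : V.PosDef)
    (hlam : 0 < lam) (hD : 0 ≤ D) (hβ : 0 ≤ β)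
    (hdiff : frob ((fromCols Ahat Bhat - fromCols Astar Bstar) * msqrt V) ≤ β)
    (hhatnorm : frob (fromCols Ahat Bhat) ≤ D + 1 / lam) :
    |((Q + Kᵀ * R * K) * (clCov Astar Bstar K σw - clCov Ahat Bhat K σw)).trace|
      ≤ (C ^ 2 * (frob Q + Kbar ^ 2 * frob R) / (1 - ρ ^ 2)) *
          (2 * (D + 1 / lam) * β * spec (msqrt V) + β ^ 2) *
          (V⁻¹ * clCovTilde Astar Bstar K σw).trace :=
  cost_difference_bound_weighted_star_general Ahat Astar Bhat Bstar K Kbar C ρ σw lam D β Q R V hK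
    hρ hhat hstar hV hdiff hhatnorm
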